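/- arXiv:2508.17093 — 4 statements merged into one kernel-verified Lean document; each statement's English description precedes it below -/
import Mathlib

section
/- Let d be a positive integer and r a real number with r ≥ 1. For all vectors a, b in ℝ^d one has ⟨|a|^{r−1}a − |b|^{r−1}b, a − b⟩ ≥ (1/2)·|a|^{r−1}·|a − b|² + (1/2)·|b|^{r−1}·|a − b|²; in particular the left-hand side is nonnegative. -/
open scoped RealInnerProductSpace

/-- For `r ≥ 1` and vectors `a b` in `ℝ^d`, one has
`⟨|a|^{r-1}a - |b|^{r-1}b, a - b⟩ ≥ (1/2)|a|^{r-1}|a-b|² + (1/2)|b|^{r-1}|a-b|²`,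
and in particular the left-hand side is nonnegative. -/
theorem damping_monotonicity_pointwise (d : ℕ) (hd : 0 < d) (r : ℝ) (hr : 1 ≤ r)
    (a b : EuclideanSpace ℝ (Fin d)) :
    (1 / 2) * ‖a‖ ^ (r - 1) * ‖a - b‖ ^ 2 + (1 / 2) * ‖b‖ ^ (r - 1) * ‖a - b‖ ^ 2
      ≤ ⟪(‖a‖ ^ (r - 1)) • a - (‖b‖ ^ (r - 1)) • b, a - b⟫ ∧
    0 ≤ ⟪(‖a‖ ^ (r - 1)) • a - (‖b‖ ^ (r - 1)) • b, a - b⟫ := by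
  set A := ‖a‖ ^ (r - 1) with hA
  set B := ‖b‖ ^ (r - 1) with hB
  have hA0 : 0 ≤ A := Real.rpow_nonneg (norm_nonneg a) _
  have hB0 : 0 ≤ B := Real.rpow_nonneg (norm_nonneg b) _
  have hexp : ⟪A • a - B • b, a - b⟫ =
      A * ‖a‖ ^ 2 + B * ‖b‖ ^ 2 - (A + B) * ⟪a, b⟫ := by
    rw [inner_sub_left, inner_sub_right, inner_sub_right, real_inner_smul_left,
      real_inner_smul_left, real_inner_smul_left, real_inner_smul_left,
      real_inner_self_eq_norm_sq, real_inner_self_eq_norm_sq, real_inner_comm b a]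
    ring
  have hnorm : ‖a - b‖ ^ 2 = ‖a‖ ^ 2 - 2 * ⟪a, b⟫ + ‖b‖ ^ 2 := by
    rw [norm_sub_sq_real]
  have hsign : 0 ≤ (A - B) * (‖a‖ ^ 2 - ‖b‖ ^ 2) := by
    rcases le_total ‖a‖ ‖b‖ with h | h
    · have h1 : A ≤ B := Real.rpow_le_rpow (norm_nonneg a) h (by linarith)
      have h2 : ‖a‖ ^ 2 ≤ ‖b‖ ^ 2 := by nlinarith [norm_nonneg a]
      nlinarith
    · have h1 : B ≤ A := Real.rpow_le_rpow (norm_nonneg b) h (by linarith)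
      have h2 : ‖b‖ ^ 2 ≤ ‖a‖ ^ 2 := by nlinarith [norm_nonneg b]
      exact mul_nonneg (by linarith) (by linarith)
  have hmain : (1 / 2) * A * ‖a - b‖ ^ 2 + (1 / 2) * B * ‖a - b‖ ^ 2
      ≤ ⟪A • a - B • b, a - b⟫ := by
    rw [hexp, hnorm]; nlinarith [hsign]
  refine ⟨hmain, le_trans ?_ hmain⟩
  have := sq_nonneg ‖a - b‖
  positivity
end

section
/- Let d be a positive integer, r ≥ 1 a real number, and O ⊆ ℝ^d a measurable set equipped with Lebesgue measure. If y, z : O → ℝ^d are a.e.-strongly measurable and ∫_O |y|^{r+1} dx < ∞ and ∫_O |z|^{r+1} dx < ∞, then all integrals below are finite and ∫_O ⟨|y(x)|^{r−1}y(x) − |z(x)|^{r−1}z(x), y(x) − z(x)⟩ dx ≥ (1/2)∫_O |y(x)|^{r−1}|y(x) − z(x)|² dx + (1/2)∫_O |z(x)|^{r−1}|y(x) − z(x)|² dx ≥ 0. -/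
open MeasureTheory
open scoped RealInnerProductSpace ENNReal

section Aux

variable {E : Type*} [NormedAddCommGroup E] [InnerProductSpace ℝ E]

lemma damping_key_pointwise (r : ℝ) (hr : 1 ≤ r) (a b : E) :
    (1/2) * (‖a‖ ^ (r-1) * ‖a-b‖ ^ 2) + (1/2) * (‖b‖ ^ (r-1) * ‖a-b‖ ^ 2)
      ≤ ⟪(‖a‖ ^ (r-1)) • a - (‖b‖ ^ (r-1)) • b, a - b⟫ := by
  set c := ‖a‖ ^ (r-1) with hc
  set d := ‖b‖ ^ (r-1) with hd
  have hsign : 0 ≤ (c - d) * (‖a‖ ^ 2 - ‖b‖ ^ 2) := by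
    rcases le_total ‖a‖ ‖b‖ with h | h
    · have h1 : c - d ≤ 0 :=
        sub_nonpos.2 (Real.rpow_le_rpow (norm_nonneg a) h (by linarith))
      have h2 : ‖a‖ ^ 2 - ‖b‖ ^ 2 ≤ 0 := by nlinarith [norm_nonneg a, norm_nonneg b]
      nlinarith [h1, h2]
    · apply mul_nonneg
      · exact sub_nonneg.2 (Real.rpow_le_rpow (norm_nonneg b) h (by linarith))
      · nlinarith [norm_nonneg a, norm_nonneg b]
  have hinner : ⟪c • a - d • b, a - b⟫ = c * ‖a‖ ^ 2 - (c + d) * ⟪a, b⟫ + d * ‖b‖ ^ 2 := by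
    rw [inner_sub_left, real_inner_smul_left, real_inner_smul_left, inner_sub_right,
      inner_sub_right, real_inner_self_eq_norm_sq, real_inner_self_eq_norm_sq,
      real_inner_comm a b]
    ring
  have hns := norm_sub_sq_real a b
  rw [hinner, hns]
  nlinarith [hsign]

lemma damping_rpow_mul_sq (r : ℝ) (hr : 1 ≤ r) {S : ℝ} (hS : 0 ≤ S) :
    S ^ (r-1) * S ^ 2 = S ^ (r+1) := by
  rcases eq_or_lt_of_le hS with h | h
  · rw [← h, Real.zero_rpow (by linarith : r + 1 ≠ 0)]
    norm_num
  · rw [show S ^ 2 = S ^ ((2:ℕ):ℝ) from (Real.rpow_natCast S 2).symm, ← Real.rpow_add h]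
    norm_num
    rw [show r - 1 + 2 = r + 1 by ring]

lemma damping_rpow_add_le (p : ℝ) (hp : 0 ≤ p) {a b : ℝ} (ha : 0 ≤ a) (hb : 0 ≤ b) :
    (a + b) ^ p ≤ 2 ^ p * (a ^ p + b ^ p) := by
  have hmax : 0 ≤ max a b := le_trans ha (le_max_left a b)
  calc (a + b) ^ p ≤ (2 * max a b) ^ p := by
        apply Real.rpow_le_rpow (add_nonneg ha hb) _ hp
        rcases le_total a b with h | h
        · rw [max_eq_right h]; linarith
        · rw [max_eq_left h]; linarith
    _ = 2 ^ p * (max a b) ^ p := Real.mul_rpow (by norm_num) hmax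
    _ ≤ 2 ^ p * (a ^ p + b ^ p) := by
        apply mul_le_mul_of_nonneg_left _ (Real.rpow_nonneg (by norm_num) p)
        rcases le_total a b with h | h
        · rw [max_eq_right h]; exact le_add_of_nonneg_left (Real.rpow_nonneg ha p)
        · rw [max_eq_left h]; exact le_add_of_nonneg_right (Real.rpow_nonneg hb p)

end Aux

/-- For `r ≥ 1`, a measurable set `O ⊆ ℝ^d`, and a.e.-strongly measurable
`y z : O → ℝ^d` with `∫_O |y|^{r+1} < ∞` and `∫_O |z|^{r+1} < ∞`, all the integrals below
are finite and
`∫_O ⟨|y|^{r-1}y - |z|^{r-1}z, y - z⟩ ≥ (1/2)∫_O |y|^{r-1}|y-z|² + (1/2)∫_O |z|^{r-1}|y-z|² ≥ 0`. -/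
theorem damping_monotonicity_integral (d : ℕ) (hd : 0 < d) (r : ℝ) (hr : 1 ≤ r)
    (O : Set (EuclideanSpace ℝ (Fin d))) (hO : MeasurableSet O)
    (y z : EuclideanSpace ℝ (Fin d) → EuclideanSpace ℝ (Fin d))
    (hy : AEStronglyMeasurable y (volume.restrict O))
    (hz : AEStronglyMeasurable z (volume.restrict O))
    (hyint : ∫⁻ x in O, ENNReal.ofReal (‖y x‖ ^ (r + 1)) < ⊤)
    (hzint : ∫⁻ x in O, ENNReal.ofReal (‖z x‖ ^ (r + 1)) < ⊤) :
    IntegrableOn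
        (fun x => ⟪(‖y x‖ ^ (r - 1)) • y x - (‖z x‖ ^ (r - 1)) • z x, y x - z x⟫) O ∧
    IntegrableOn (fun x => ‖y x‖ ^ (r - 1) * ‖y x - z x‖ ^ 2) O ∧
    IntegrableOn (fun x => ‖z x‖ ^ (r - 1) * ‖y x - z x‖ ^ 2) O ∧
    (1 / 2) * (∫ x in O, ‖y x‖ ^ (r - 1) * ‖y x - z x‖ ^ 2)
        + (1 / 2) * (∫ x in O, ‖z x‖ ^ (r - 1) * ‖y x - z x‖ ^ 2)
      ≤ ∫ x in O, ⟪(‖y x‖ ^ (r - 1)) • y x - (‖z x‖ ^ (r - 1)) • z x, y x - z x⟫ ∧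
    0 ≤ (1 / 2) * (∫ x in O, ‖y x‖ ^ (r - 1) * ‖y x - z x‖ ^ 2)
        + (1 / 2) * (∫ x in O, ‖z x‖ ^ (r - 1) * ‖y x - z x‖ ^ 2) := by
  set μ := volume.restrict O with hμ
  -- measurability of the norm-power functions
  have hyr : AEMeasurable (fun x => ‖y x‖ ^ (r - 1)) μ :=
    hy.norm.aemeasurable.pow aemeasurable_const
  have hzr : AEMeasurable (fun x => ‖z x‖ ^ (r - 1)) μ :=
    hz.norm.aemeasurable.pow aemeasurable_const
  -- integrability of ‖y‖^(r+1) and ‖z‖^(r+1)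
  have hY : Integrable (fun x => ‖y x‖ ^ (r + 1)) μ := by
    refine ⟨(hy.norm.aemeasurable.pow aemeasurable_const).aestronglyMeasurable, ?_⟩
    rw [hasFiniteIntegral_iff_ofReal
      (Filter.Eventually.of_forall fun x => Real.rpow_nonneg (norm_nonneg _) _)]
    exact hyint
  have hZ : Integrable (fun x => ‖z x‖ ^ (r + 1)) μ := by
    refine ⟨(hz.norm.aemeasurable.pow aemeasurable_const).aestronglyMeasurable, ?_⟩
    rw [hasFiniteIntegral_iff_ofReal
      (Filter.Eventually.of_forall fun x => Real.rpow_nonneg (norm_nonneg _) _)]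
    exact hzint
  set g : EuclideanSpace ℝ (Fin d) → ℝ :=
    fun x => 2 * (2 ^ (r+1) * (‖y x‖ ^ (r+1) + ‖z x‖ ^ (r+1))) with hg
  have hgint : Integrable g μ := ((hY.add hZ).const_mul _).const_mul _
  -- pointwise bounds
  have hSbound : ∀ x, (‖y x‖ + ‖z x‖) ^ (r+1) ≤ 2 ^ (r+1) * (‖y x‖ ^ (r+1) + ‖z x‖ ^ (r+1)) :=
    fun x => damping_rpow_add_le (r+1) (by linarith) (norm_nonneg _) (norm_nonneg _)
  have hb1 : ∀ x, ‖y x‖ ^ (r-1) * ‖y x - z x‖ ^ 2 ≤ g x := by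
    intro x
    set S := ‖y x‖ + ‖z x‖ with hS
    have hS0 : 0 ≤ S := add_nonneg (norm_nonneg _) (norm_nonneg _)
    have h1 : ‖y x‖ ^ (r-1) ≤ S ^ (r-1) :=
      Real.rpow_le_rpow (norm_nonneg _) (le_add_of_nonneg_right (norm_nonneg _)) (by linarith)
    have h2 : ‖y x - z x‖ ^ 2 ≤ S ^ 2 := by
      apply pow_le_pow_left₀ (norm_nonneg _) (norm_sub_le _ _)
    have := mul_le_mul h1 h2 (by positivity) (Real.rpow_nonneg hS0 _)
    rw [damping_rpow_mul_sq r hr hS0] at this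
    have h3 := hSbound x
    simp only [hg]
    nlinarith [Real.rpow_nonneg hS0 (r+1)]
  have hb2 : ∀ x, ‖z x‖ ^ (r-1) * ‖y x - z x‖ ^ 2 ≤ g x := by
    intro x
    set S := ‖y x‖ + ‖z x‖ with hS
    have hS0 : 0 ≤ S := add_nonneg (norm_nonneg _) (norm_nonneg _)
    have h1 : ‖z x‖ ^ (r-1) ≤ S ^ (r-1) :=
      Real.rpow_le_rpow (norm_nonneg _) (le_add_of_nonneg_left (norm_nonneg _)) (by linarith)
    have h2 : ‖y x - z x‖ ^ 2 ≤ S ^ 2 := by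
      apply pow_le_pow_left₀ (norm_nonneg _) (norm_sub_le _ _)
    have := mul_le_mul h1 h2 (by positivity) (Real.rpow_nonneg hS0 _)
    rw [damping_rpow_mul_sq r hr hS0] at this
    have h3 := hSbound x
    simp only [hg]
    nlinarith [Real.rpow_nonneg hS0 (r+1)]
  have hbf : ∀ x, |⟪(‖y x‖ ^ (r - 1)) • y x - (‖z x‖ ^ (r - 1)) • z x, y x - z x⟫| ≤ g x := by
    intro x
    set S := ‖y x‖ + ‖z x‖ with hS
    have hS0 : 0 ≤ S := add_nonneg (norm_nonneg _) (norm_nonneg _)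
    have h1 : ‖y x‖ ^ (r-1) * ‖y x‖ ≤ S ^ (r-1) * S :=
      mul_le_mul (Real.rpow_le_rpow (norm_nonneg _) (le_add_of_nonneg_right (norm_nonneg _))
        (by linarith)) (le_add_of_nonneg_right (norm_nonneg _)) (norm_nonneg _)
        (Real.rpow_nonneg hS0 _)
    have h2 : ‖z x‖ ^ (r-1) * ‖z x‖ ≤ S ^ (r-1) * S :=
      mul_le_mul (Real.rpow_le_rpow (norm_nonneg _) (le_add_of_nonneg_left (norm_nonneg _))
        (by linarith)) (le_add_of_nonneg_left (norm_nonneg _)) (norm_nonneg _)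
        (Real.rpow_nonneg hS0 _)
    have habs := abs_real_inner_le_norm
      ((‖y x‖ ^ (r - 1)) • y x - (‖z x‖ ^ (r - 1)) • z x) (y x - z x)
    have hn1 : ‖(‖y x‖ ^ (r - 1)) • y x - (‖z x‖ ^ (r - 1)) • z x‖
        ≤ ‖y x‖ ^ (r-1) * ‖y x‖ + ‖z x‖ ^ (r-1) * ‖z x‖ := by
      refine le_trans (norm_sub_le _ _) ?_
      rw [norm_smul, norm_smul, Real.norm_eq_abs, Real.norm_eq_abs,
        abs_of_nonneg (Real.rpow_nonneg (norm_nonneg _) _),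
        abs_of_nonneg (Real.rpow_nonneg (norm_nonneg _) _)]
    have hn2 : ‖y x - z x‖ ≤ S := norm_sub_le _ _
    have hmm : ‖(‖y x‖ ^ (r - 1)) • y x - (‖z x‖ ^ (r - 1)) • z x‖ * ‖y x - z x‖
        ≤ (2 * (S ^ (r-1) * S)) * S := by
      apply mul_le_mul (by linarith) hn2 (norm_nonneg _)
      positivity
    have hSS : S ^ (r-1) * S * S = S ^ (r+1) := by
      have := damping_rpow_mul_sq r hr hS0
      nlinarith [this]
    have h3 := hSbound x
    simp only [hg]
    nlinarith [abs_nonneg ⟪(‖y x‖ ^ (r - 1)) • y x - (‖z x‖ ^ (r - 1)) • z x, y x - z x⟫]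
  -- a.e. strong measurability of the integrands
  have hf_meas : AEStronglyMeasurable
      (fun x => ⟪(‖y x‖ ^ (r - 1)) • y x - (‖z x‖ ^ (r - 1)) • z x, y x - z x⟫) μ := by
    exact AEStronglyMeasurable.inner
      ((hyr.aestronglyMeasurable.smul hy).sub (hzr.aestronglyMeasurable.smul hz))
      (hy.sub hz)
  have hg1_meas : AEStronglyMeasurable (fun x => ‖y x‖ ^ (r - 1) * ‖y x - z x‖ ^ 2) μ :=
    (hyr.mul ((hy.sub hz).norm.aemeasurable.pow_const 2)).aestronglyMeasurable
  have hg2_meas : AEStronglyMeasurable (fun x => ‖z x‖ ^ (r - 1) * ‖y x - z x‖ ^ 2) μ :=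
    (hzr.mul ((hy.sub hz).norm.aemeasurable.pow_const 2)).aestronglyMeasurable
  -- integrability
  have hif : IntegrableOn
      (fun x => ⟪(‖y x‖ ^ (r - 1)) • y x - (‖z x‖ ^ (r - 1)) • z x, y x - z x⟫) O := by
    refine Integrable.mono' hgint hf_meas (Filter.Eventually.of_forall fun x => ?_)
    rw [Real.norm_eq_abs]; exact hbf x
  have hig1 : IntegrableOn (fun x => ‖y x‖ ^ (r - 1) * ‖y x - z x‖ ^ 2) O := by
    refine Integrable.mono' hgint hg1_meas (Filter.Eventually.of_forall fun x => ?_)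
    rw [Real.norm_eq_abs, abs_of_nonneg (by positivity)]; exact hb1 x
  have hig2 : IntegrableOn (fun x => ‖z x‖ ^ (r - 1) * ‖y x - z x‖ ^ 2) O := by
    refine Integrable.mono' hgint hg2_meas (Filter.Eventually.of_forall fun x => ?_)
    rw [Real.norm_eq_abs, abs_of_nonneg (by positivity)]; exact hb2 x
  refine ⟨hif, hig1, hig2, ?_, ?_⟩
  · have hsum : (1 / 2) * (∫ x in O, ‖y x‖ ^ (r - 1) * ‖y x - z x‖ ^ 2)
        + (1 / 2) * (∫ x in O, ‖z x‖ ^ (r - 1) * ‖y x - z x‖ ^ 2)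
        = ∫ x in O, ((1/2) * (‖y x‖ ^ (r - 1) * ‖y x - z x‖ ^ 2)
            + (1/2) * (‖z x‖ ^ (r - 1) * ‖y x - z x‖ ^ 2)) := by
      rw [integral_add (hig1.const_mul _) (hig2.const_mul _),
        integral_const_mul, integral_const_mul]
    rw [hsum]
    exact integral_mono ((hig1.const_mul _).add (hig2.const_mul _)) hif
      (fun x => damping_key_pointwise r hr (y x) (z x))
  · have h1 : 0 ≤ ∫ x in O, ‖y x‖ ^ (r - 1) * ‖y x - z x‖ ^ 2 :=
      integral_nonneg fun x => by positivity
    have h2 : 0 ≤ ∫ x in O, ‖z x‖ ^ (r - 1) * ‖y x - z x‖ ^ 2 :=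
      integral_nonneg fun x => by positivity
    linarith
end

section
/- Let d be a positive integer and r a real number with r ≥ 1. For all vectors a, b in ℝ^d one has ⟨|a|^{r−1}a − |b|^{r−1}b, a − b⟩ ≥ 2^{1−r}·|a − b|^{r+1}. -/
open scoped RealInnerProductSpace

private lemma rpow_mul_self (s x : ℝ) (hs : s + 1 ≠ 0) (hx : 0 ≤ x) :
    x ^ s * x = x ^ (s + 1) := by
  rcases hx.eq_or_lt with h | h
  · simp [← h, Real.zero_rpow hs]
  · rw [Real.rpow_add_one h.ne' s]

private lemma two_convex (r : ℝ) (hr : 1 ≤ r) (A B : ℝ) (hA : 0 ≤ A) (hB : 0 ≤ B) :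
    (2:ℝ) ^ (1 - r) * (A + B) ^ r ≤ A ^ r + B ^ r := by
  have h := (convexOn_rpow hr).2 (Set.mem_Ici.2 hA) (Set.mem_Ici.2 hB)
      (by norm_num : (0:ℝ) ≤ 1/2) (by norm_num : (0:ℝ) ≤ 1/2) (by norm_num)
  simp only [smul_eq_mul] at h
  rw [show (1:ℝ)/2 * A + 1/2 * B = (A+B) * (2:ℝ)⁻¹ by ring,
    Real.mul_rpow (by linarith) (by norm_num),
    Real.inv_rpow (by norm_num : (0:ℝ) ≤ 2)] at h
  have h3 : (2:ℝ)^(1-r) = 2 * ((2:ℝ)^r)⁻¹ := by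
    rw [show (1:ℝ)-r = 1 + -r by ring, Real.rpow_add (by norm_num), Real.rpow_one,
      Real.rpow_neg (by norm_num)]
  rw [h3]; nlinarith [h]

private lemma half_pow (r : ℝ) (hr : 1 ≤ r) (A B : ℝ) (hB : 0 ≤ B) (hBA : B ≤ A) :
    (2:ℝ) ^ (1 - r) * (A + B) ^ (r - 1) ≤ A ^ (r - 1) := by
  have h0 : (0:ℝ) ≤ r - 1 := by linarith
  have key : ((A + B) * (2:ℝ)⁻¹) ^ (r-1) ≤ A ^ (r-1) :=
    Real.rpow_le_rpow (by linarith) (by linarith) h0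
  rw [Real.mul_rpow (by linarith) (by norm_num),
    Real.inv_rpow (by norm_num : (0:ℝ) ≤ 2)] at key
  have h3 : (2:ℝ)^(1-r) = 2 * ((2:ℝ)^r)⁻¹ := by
    rw [show (1:ℝ)-r = 1 + -r by ring, Real.rpow_add (by norm_num), Real.rpow_one,
      Real.rpow_neg (by norm_num)]
  have h4 : ((2:ℝ)^(r-1))⁻¹ = 2 * ((2:ℝ)^r)⁻¹ := by
    rw [show r - 1 = r + -1 by ring, Real.rpow_add (by norm_num)]
    simp [Real.rpow_neg_one]
  rw [h3, ← h4]; linarith [key]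

private lemma endpoint1_aux (r : ℝ) (hr : 1 ≤ r) (A B : ℝ) (hB : 0 ≤ B) (hBA : B ≤ A) :
    (2:ℝ)^(1-r) * (A+B)^(r-1) * (A-B)^2
      ≤ (A-B) * (A^(r-1) * A - B^(r-1) * B) := by
  have hp := half_pow r hr A B hB hBA
  have hpow : B^(r-1) ≤ A^(r-1) := Real.rpow_le_rpow hB hBA (by linarith)
  nlinarith [mul_le_mul_of_nonneg_right hp (sq_nonneg (A-B)),
    mul_nonneg (mul_nonneg (sub_nonneg.2 hBA) hB) (sub_nonneg.2 hpow)]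

private lemma endpoint1 (r : ℝ) (hr : 1 ≤ r) (A B : ℝ) (hA : 0 ≤ A) (hB : 0 ≤ B) :
    (2:ℝ)^(1-r) * (A+B)^(r-1) * (A-B)^2
      ≤ (A-B) * (A^(r-1) * A - B^(r-1) * B) := by
  rcases le_total B A with h | h
  · exact endpoint1_aux r hr A B hB h
  · have := endpoint1_aux r hr B A hA h
    rw [add_comm B A] at this
    nlinarith [this]

private lemma endpoint2 (r : ℝ) (hr : 1 ≤ r) (A B : ℝ) (hA : 0 ≤ A) (hB : 0 ≤ B) :
    (2:ℝ)^(1-r) * (A+B)^(r-1) * (A+B)^2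
      ≤ (A+B) * (A^(r-1) * A + B^(r-1) * B) := by
  have h := two_convex r hr A B hA hB
  have hAr : A^(r-1) * A = A^r := by
    rw [rpow_mul_self (r-1) A (by intro hh; linarith) hA]; norm_num
  have hBr : B^(r-1) * B = B^r := by
    rw [rpow_mul_self (r-1) B (by intro hh; linarith) hB]; norm_num
  have hSr : (A+B)^(r-1) * (A+B) = (A+B)^r := by
    rw [rpow_mul_self (r-1) (A+B) (by intro hh; linarith) (by linarith)]; norm_num
  calc (2:ℝ)^(1-r) * (A+B)^(r-1) * (A+B)^2
      = ((2:ℝ)^(1-r) * ((A+B)^(r-1) * (A+B))) * (A+B) := by ring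
    _ = ((2:ℝ)^(1-r) * (A+B)^r) * (A+B) := by rw [hSr]
    _ ≤ (A^r + B^r) * (A+B) := mul_le_mul_of_nonneg_right h (by linarith)
    _ = (A+B) * (A^(r-1) * A + B^(r-1) * B) := by rw [hAr, hBr]; ring

private lemma key_scalar (r : ℝ) (hr : 1 ≤ r) (A B C u : ℝ) (hA : 0 ≤ A) (hB : 0 ≤ B)
    (hC : 0 ≤ C) (hu : |u| ≤ A * B) (hCsq : C ^ 2 = A ^ 2 + B ^ 2 - 2 * u)
    (hCle : C ≤ A + B) :
    (2:ℝ) ^ (1 - r) * C ^ (r + 1)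
      ≤ A ^ (r - 1) * A ^ 2 - A ^ (r - 1) * u - B ^ (r - 1) * u + B ^ (r - 1) * B ^ 2 := by
  have hr0 : (0:ℝ) ≤ r - 1 := by linarith
  have hA2 : A ^ (r-1) * A^2 = (A^(r-1) * A) * A := by ring
  have eC : C^(r-1) * C^2 = C^(r+1) := by
    have h1 := rpow_mul_self (r-1) C (by intro hh; linarith) hC
    have h2 := rpow_mul_self r C (by intro hh; linarith) hC
    calc C^(r-1) * C^2 = (C^(r-1) * C) * C := by ring
      _ = C^(r-1+1) * C := by rw [h1]
      _ = C^r * C := by norm_num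
      _ = C^(r+1) := h2
  have hCr : C^(r-1) ≤ (A+B)^(r-1) := Real.rpow_le_rpow hC hCle hr0
  have h2p : (0:ℝ) < (2:ℝ)^(1-r) := Real.rpow_pos_of_pos (by norm_num) _
  have step1 : (2:ℝ)^(1-r) * C^(r+1)
      ≤ (2:ℝ)^(1-r) * ((A+B)^(r-1) * (A^2+B^2-2*u)) := by
    calc (2:ℝ)^(1-r) * C^(r+1) = (2:ℝ)^(1-r) * (C^(r-1) * C^2) := by rw [eC]
      _ ≤ (2:ℝ)^(1-r) * ((A+B)^(r-1) * C^2) := by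
          apply mul_le_mul_of_nonneg_left _ h2p.le
          exact mul_le_mul_of_nonneg_right hCr (sq_nonneg C)
      _ = (2:ℝ)^(1-r) * ((A+B)^(r-1) * (A^2+B^2-2*u)) := by rw [hCsq]
  refine step1.trans ?_
  obtain ⟨hu1, hu2⟩ := abs_le.mp hu
  have e1 := endpoint1 r hr A B hA hB
  have e2 := endpoint2 r hr A B hA hB
  set c : ℝ := A^(r-1) + B^(r-1) - 2*((2:ℝ)^(1-r) * (A+B)^(r-1)) with hc
  rcases le_or_gt 0 c with hcs | hcs
  · have hcu : c * u ≤ c * (A*B) := mul_le_mul_of_nonneg_left hu2 hcs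
    nlinarith [e1, hcu]
  · have hcu : c * u ≤ c * (-(A*B)) := mul_le_mul_of_nonpos_left hu1 hcs.le
    nlinarith [e2, hcu]

/-- For `r ≥ 1` and vectors `a b` in `ℝ^d`, one has
`⟨|a|^{r-1}a - |b|^{r-1}b, a - b⟩ ≥ 2^{1-r} |a - b|^{r+1}`. -/
theorem damping_strong_monotonicity_pointwise (d : ℕ) (hd : 0 < d) (r : ℝ) (hr : 1 ≤ r)
    (a b : EuclideanSpace ℝ (Fin d)) :
    (2 : ℝ) ^ (1 - r) * ‖a - b‖ ^ (r + 1)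
      ≤ ⟪(‖a‖ ^ (r - 1)) • a - (‖b‖ ^ (r - 1)) • b, a - b⟫ := by
  have hexp : ⟪(‖a‖ ^ (r - 1)) • a - (‖b‖ ^ (r - 1)) • b, a - b⟫
      = ‖a‖^(r-1) * ‖a‖^2 - ‖a‖^(r-1) * ⟪a,b⟫ - ‖b‖^(r-1) * ⟪a,b⟫ + ‖b‖^(r-1) * ‖b‖^2 := by
    simp only [inner_sub_left, inner_sub_right, real_inner_smul_left,
      real_inner_self_eq_norm_sq, real_inner_comm b a]
    ring
  rw [hexp]
  exact key_scalar r hr ‖a‖ ‖b‖ ‖a - b‖ ⟪a,b⟫ (norm_nonneg a) (norm_nonneg b)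
    (norm_nonneg _) (abs_real_inner_le_norm a b)
    (by rw [norm_sub_sq_real]; ring) (norm_sub_le a b)
end

section
/- Let d be a positive integer, r ≥ 1 a real number, and O ⊆ ℝ^d a measurable set equipped with Lebesgue measure. If y, z : O → ℝ^d are a.e.-strongly measurable and ∫_O |y|^{r+1} dx < ∞ and ∫_O |z|^{r+1} dx < ∞, then ∫_O ⟨|y(x)|^{r−1}y(x) − |z(x)|^{r−1}z(x), y(x) − z(x)⟩ dx ≥ 2^{1−r}·∫_O |y(x) − z(x)|^{r+1} dx = 2^{1−r}·‖y − z‖_{L^{r+1}}^{r+1}. -/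
open MeasureTheory
open scoped RealInnerProductSpace

/-!
Write `s = |a|`, `t = |b|`, `c = ⟨a, b⟩`. Both `|a - b|²` and `⟨|a|^{r-1}a - |b|^{r-1}b, a - b⟩`
are affine in `c`, and `c` ranges over `[-st, st]`. Hence the left side
`2^{1-r}(|a - b|²)^{(r+1)/2}` of the pointwise inequality is a convex function of `c` while the
right side is affine, so it suffices to check the endpoints `c = ∓st`. There `a` and `b` are
(anti)parallel and the inequality reduces to the power-mean inequality
`(s + t)^r ≤ 2^{r-1}(s^r + t^r)` and to superadditivity `(s - t)^r + t^r ≤ s^r`.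
Integrating the pointwise inequality gives the theorem; the integrand on the right is dominated
by `2(|y|^{r+1} + |z|^{r+1})`.
-/

namespace Real

lemma rpow_add_le_mul_rpow_add_rpow {a b p : ℝ} (ha : 0 ≤ a) (hb : 0 ≤ b) (hp : 1 ≤ p) :
    (a + b) ^ p ≤ 2 ^ (p - 1) * (a ^ p + b ^ p) := by
  lift a to NNReal using ha
  lift b to NNReal using hb
  exact_mod_cast NNReal.rpow_add_le_mul_rpow_add_rpow a b hp

lemma sub_rpow_le_rpow_sub_rpow {a b p : ℝ} (hb : 0 ≤ b) (hba : b ≤ a) (hp : 1 ≤ p) :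
    (a - b) ^ p ≤ a ^ p - b ^ p := by
  have h := add_rpow_le_rpow_add (sub_nonneg.2 hba) hb hp
  rw [sub_add_cancel] at h
  linarith

lemma abs_rpow_eq_sq_rpow_half (x p : ℝ) : |x| ^ p = (x ^ 2) ^ (p / 2) := by
  rw [← sq_abs, ← rpow_natCast_mul (abs_nonneg x)]
  congr 1
  push_cast
  ring

lemma rpow_mul_add_rpow_mul_le {s t r : ℝ} (hs : 0 ≤ s) (ht : 0 ≤ t) (hr : 0 ≤ r) :
    s ^ r * t + t ^ r * s ≤ s ^ (r + 1) + t ^ (r + 1) := by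
  have hmono : 0 ≤ (s ^ r - t ^ r) * (s - t) := by
    rcases le_total s t with h | h
    · exact mul_nonneg_of_nonpos_of_nonpos (sub_nonpos.2 (rpow_le_rpow hs h hr)) (sub_nonpos.2 h)
    · exact mul_nonneg (sub_nonneg.2 (rpow_le_rpow ht h hr)) (sub_nonneg.2 h)
  rw [rpow_add_one' hs (by linarith), rpow_add_one' ht (by linarith)]
  linarith

end Real

open Real

section Scalar

variable {s t r : ℝ}

lemma two_rpow_one_sub_mul_add_rpow_add_one_le (hs : 0 ≤ s) (ht : 0 ≤ t) (hr : 1 ≤ r) :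
    2 ^ (1 - r) * (s + t) ^ (r + 1) ≤ (s ^ r + t ^ r) * (s + t) := by
  have hinv : (2 : ℝ) ^ (1 - r) * 2 ^ (r - 1) = 1 := by
    rw [← rpow_add two_pos]
    norm_num
  calc 2 ^ (1 - r) * (s + t) ^ (r + 1) = 2 ^ (1 - r) * (s + t) ^ r * (s + t) := by
        rw [rpow_add_one' (add_nonneg hs ht) (by linarith), mul_assoc]
    _ ≤ 2 ^ (1 - r) * (2 ^ (r - 1) * (s ^ r + t ^ r)) * (s + t) := by
        gcongr
        exact rpow_add_le_mul_rpow_add_rpow hs ht hr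
    _ = (s ^ r + t ^ r) * (s + t) := by rw [← mul_assoc, hinv, one_mul]

lemma two_rpow_one_sub_mul_abs_sub_rpow_add_one_le (hs : 0 ≤ s) (ht : 0 ≤ t) (hr : 1 ≤ r) :
    2 ^ (1 - r) * |s - t| ^ (r + 1) ≤ (s ^ r - t ^ r) * (s - t) := by
  wlog hts : t ≤ s generalizing s t
  · have h := this ht hs (le_of_not_ge hts)
    rwa [abs_sub_comm, ← neg_sub s t, ← neg_sub (s ^ r) (t ^ r), neg_mul_neg] at h
  have hst : 0 ≤ s - t := sub_nonneg.2 hts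
  rw [abs_of_nonneg hst, rpow_add_one' hst (by linarith)]
  calc 2 ^ (1 - r) * ((s - t) ^ r * (s - t)) ≤ (s - t) ^ r * (s - t) :=
        mul_le_of_le_one_left (by positivity)
          (rpow_le_one_of_one_le_of_nonpos one_le_two (by linarith))
    _ ≤ (s ^ r - t ^ r) * (s - t) := by
        gcongr
        exact sub_rpow_le_rpow_sub_rpow ht hts hr

lemma two_rpow_one_sub_mul_rpow_le_of_abs_le {c : ℝ} (hs : 0 ≤ s) (ht : 0 ≤ t)
    (hc : |c| ≤ s * t) (hr : 1 ≤ r) :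
    2 ^ (1 - r) * (s ^ 2 - 2 * c + t ^ 2) ^ ((r + 1) / 2)
      ≤ s ^ (r - 1) * s ^ 2 + t ^ (r - 1) * t ^ 2 - (s ^ (r - 1) + t ^ (r - 1)) * c := by
  obtain ⟨p, q, hp, hq, hpq, rfl⟩ : c ∈ segment ℝ (-(s * t)) (s * t) := by
    rw [segment_eq_Icc (by linarith [abs_nonneg c])]
    exact abs_le.mp hc
  have hsr : s ^ r = s ^ (r - 1) * s := by rw [← rpow_add_one' hs (by linarith), sub_add_cancel]
  have htr : t ^ r = t ^ (r - 1) * t := by rw [← rpow_add_one' ht (by linarith), sub_add_cancel]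
  have hsq : s ^ 2 - 2 * (p • -(s * t) + q • (s * t)) + t ^ 2
      = p * (s + t) ^ 2 + q * (s - t) ^ 2 := by
    simp only [smul_eq_mul]
    linear_combination (-(s ^ 2 + t ^ 2)) * hpq
  have hrhs : s ^ (r - 1) * s ^ 2 + t ^ (r - 1) * t ^ 2
        - (s ^ (r - 1) + t ^ (r - 1)) * (p • -(s * t) + q • (s * t))
      = p * ((s ^ r + t ^ r) * (s + t)) + q * ((s ^ r - t ^ r) * (s - t)) := by
    simp only [smul_eq_mul, hsr, htr]
    linear_combination (-(s ^ (r - 1) * s ^ 2 + t ^ (r - 1) * t ^ 2)) * hpq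
  have hconv := (convexOn_rpow (p := (r + 1) / 2) (by linarith)).2
    (Set.mem_Ici.2 (sq_nonneg (s + t))) (Set.mem_Ici.2 (sq_nonneg (s - t))) hp hq hpq
  simp only [smul_eq_mul, ← abs_rpow_eq_sq_rpow_half, abs_of_nonneg (add_nonneg hs ht)] at hconv
  rw [hsq, hrhs]
  calc 2 ^ (1 - r) * (p * (s + t) ^ 2 + q * (s - t) ^ 2) ^ ((r + 1) / 2)
      ≤ 2 ^ (1 - r) * (p * (s + t) ^ (r + 1) + q * |s - t| ^ (r + 1)) := by gcongr
    _ = p * (2 ^ (1 - r) * (s + t) ^ (r + 1)) + q * (2 ^ (1 - r) * |s - t| ^ (r + 1)) := by ring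
    _ ≤ p * ((s ^ r + t ^ r) * (s + t)) + q * ((s ^ r - t ^ r) * (s - t)) :=
        add_le_add
          (mul_le_mul_of_nonneg_left (two_rpow_one_sub_mul_add_rpow_add_one_le hs ht hr) hp)
          (mul_le_mul_of_nonneg_left (two_rpow_one_sub_mul_abs_sub_rpow_add_one_le hs ht hr) hq)

end Scalar

section Damping

variable {E : Type*} [NormedAddCommGroup E] [InnerProductSpace ℝ E] {r : ℝ}

noncomputable def damping (r : ℝ) (a : E) : E := ‖a‖ ^ (r - 1) • a

lemma continuous_damping (hr : 1 ≤ r) : Continuous (damping (E := E) r) :=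
  ((continuous_rpow_const (by linarith)).comp continuous_norm).smul continuous_id

lemma norm_damping (hr : 0 < r) (a : E) : ‖damping r a‖ = ‖a‖ ^ r := by
  rw [damping, norm_smul, norm_of_nonneg (by positivity),
    ← rpow_add_one' (norm_nonneg a) (by linarith), sub_add_cancel]

lemma inner_damping_sub_damping (r : ℝ) (a b : E) :
    ⟪damping r a - damping r b, a - b⟫ = ‖a‖ ^ (r - 1) * ‖a‖ ^ 2 + ‖b‖ ^ (r - 1) * ‖b‖ ^ 2
      - (‖a‖ ^ (r - 1) + ‖b‖ ^ (r - 1)) * ⟪a, b⟫ := by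
  simp only [damping, inner_sub_left, inner_sub_right, real_inner_smul_left,
    real_inner_self_eq_norm_sq, real_inner_comm a b]
  ring

theorem two_rpow_one_sub_mul_norm_sub_rpow_le_inner_damping (hr : 1 ≤ r) (a b : E) :
    2 ^ (1 - r) * ‖a - b‖ ^ (r + 1) ≤ ⟪damping r a - damping r b, a - b⟫ := by
  rw [inner_damping_sub_damping, ← abs_norm (a - b), abs_rpow_eq_sq_rpow_half, norm_sub_sq_real]
  exact two_rpow_one_sub_mul_rpow_le_of_abs_le (norm_nonneg a) (norm_nonneg b)
    (abs_real_inner_le_norm a b) hr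

lemma abs_inner_damping_sub_damping_le (hr : 0 < r) (a b : E) :
    |⟪damping r a - damping r b, a - b⟫| ≤ 2 * (‖a‖ ^ (r + 1) + ‖b‖ ^ (r + 1)) := by
  have hcross := rpow_mul_add_rpow_mul_le (norm_nonneg a) (norm_nonneg b) hr.le
  calc |⟪damping r a - damping r b, a - b⟫|
      ≤ ‖damping r a - damping r b‖ * ‖a - b‖ := abs_real_inner_le_norm _ _
    _ ≤ (‖a‖ ^ r + ‖b‖ ^ r) * (‖a‖ + ‖b‖) := by
        gcongr
        · exact (norm_sub_le _ _).trans_eq (by rw [norm_damping hr, norm_damping hr])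
        · exact norm_sub_le a b
    _ = ‖a‖ ^ (r + 1) + ‖b‖ ^ (r + 1) + (‖a‖ ^ r * ‖b‖ + ‖b‖ ^ r * ‖a‖) := by
        rw [rpow_add_one' (norm_nonneg a) (by linarith),
          rpow_add_one' (norm_nonneg b) (by linarith)]
        ring
    _ ≤ 2 * (‖a‖ ^ (r + 1) + ‖b‖ ^ (r + 1)) := by linarith

lemma integrable_inner_damping_sub_damping {α : Type*} [MeasurableSpace α] {μ : Measure α}
    {y z : α → E} (hr : 1 ≤ r) (hy : AEStronglyMeasurable y μ) (hz : AEStronglyMeasurable z μ)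
    (hyi : Integrable (fun x ↦ ‖y x‖ ^ (r + 1)) μ)
    (hzi : Integrable (fun x ↦ ‖z x‖ ^ (r + 1)) μ) :
    Integrable (fun x ↦ ⟪damping r (y x) - damping r (z x), y x - z x⟫) μ := by
  refine ((hyi.add hzi).const_mul 2).mono' ?_ (ae_of_all _ fun x ↦ ?_)
  · exact (((continuous_damping hr).comp_aestronglyMeasurable hy).sub
      ((continuous_damping hr).comp_aestronglyMeasurable hz)).inner (hy.sub hz)
  · exact abs_inner_damping_sub_damping_le (by linarith) (y x) (z x)

end Damping

lemma integrable_norm_rpow_of_lintegral_lt_top {α E : Type*} [MeasurableSpace α]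
    {μ : Measure α} [NormedAddCommGroup E] {f : α → E} {q : ℝ} (hf : AEStronglyMeasurable f μ)
    (h : ∫⁻ x, ENNReal.ofReal (‖f x‖ ^ q) ∂μ < ⊤) : Integrable (fun x ↦ ‖f x‖ ^ q) μ :=
  ⟨(hf.norm.aemeasurable.pow_const q).aestronglyMeasurable,
    (hasFiniteIntegral_iff_ofReal (ae_of_all _ fun _ ↦ by positivity)).2 h⟩

theorem damping_strong_monotonicity_integral_general (d : ℕ) (r : ℝ) (hr : 1 ≤ r)
    (O : Set (EuclideanSpace ℝ (Fin d)))
    (y z : EuclideanSpace ℝ (Fin d) → EuclideanSpace ℝ (Fin d))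
    (hy : AEStronglyMeasurable y (volume.restrict O))
    (hz : AEStronglyMeasurable z (volume.restrict O))
    (hyint : ∫⁻ x in O, ENNReal.ofReal (‖y x‖ ^ (r + 1)) < ⊤)
    (hzint : ∫⁻ x in O, ENNReal.ofReal (‖z x‖ ^ (r + 1)) < ⊤) :
    (2 : ℝ) ^ (1 - r) * (∫ x in O, ‖y x - z x‖ ^ (r + 1))
      ≤ ∫ x in O, ⟪(‖y x‖ ^ (r - 1)) • y x - (‖z x‖ ^ (r - 1)) • z x, y x - z x⟫ := by
  rw [← integral_const_mul]
  exact integral_mono_of_nonneg (ae_of_all _ fun _ ↦ by positivity)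
    (integrable_inner_damping_sub_damping hr hy hz
      (integrable_norm_rpow_of_lintegral_lt_top hy hyint)
      (integrable_norm_rpow_of_lintegral_lt_top hz hzint))
    (ae_of_all _ fun x ↦ two_rpow_one_sub_mul_norm_sub_rpow_le_inner_damping hr (y x) (z x))

/-- For `r ≥ 1`, a measurable set `O ⊆ ℝ^d`, and a.e.-strongly measurable
`y z : O → ℝ^d` with `∫_O |y|^{r+1} < ∞` and `∫_O |z|^{r+1} < ∞`, one has
`∫_O ⟨|y|^{r-1}y - |z|^{r-1}z, y - z⟩ ≥ 2^{1-r} ∫_O |y - z|^{r+1} = 2^{1-r} ‖y-z‖_{L^{r+1}}^{r+1}`. -/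
theorem damping_strong_monotonicity_integral (d : ℕ) (hd : 0 < d) (r : ℝ) (hr : 1 ≤ r)
    (O : Set (EuclideanSpace ℝ (Fin d))) (hO : MeasurableSet O)
    (y z : EuclideanSpace ℝ (Fin d) → EuclideanSpace ℝ (Fin d))
    (hy : AEStronglyMeasurable y (volume.restrict O))
    (hz : AEStronglyMeasurable z (volume.restrict O))
    (hyint : ∫⁻ x in O, ENNReal.ofReal (‖y x‖ ^ (r + 1)) < ⊤)
    (hzint : ∫⁻ x in O, ENNReal.ofReal (‖z x‖ ^ (r + 1)) < ⊤) :
    (2 : ℝ) ^ (1 - r) * (∫ x in O, ‖y x - z x‖ ^ (r + 1))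
      ≤ ∫ x in O, ⟪(‖y x‖ ^ (r - 1)) • y x - (‖z x‖ ^ (r - 1)) • z x, y x - z x⟫ :=
  damping_strong_monotonicity_integral_general d r hr O y z hy hz hyint hzint
end
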